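/- arXiv:2006.06193 — 5 statements merged into one kernel-verified Lean document; each statement's English description precedes it below -/
import Mathlib

section
/- Simultaneous realization of mixture occupancies by a Markov policy. In the finite episodic MDP setting, for any two policies π₁, π₂ and any λ ∈ [0,1], there exists a single policy π such that d_h^π(s,a) = λ·d_h^{π₁}(s,a) + (1−λ)·d_h^{π₂}(s,a) simultaneously for every step h ∈ {1,…,H} and every (s,a) ∈ 𝒮×𝒜. -/
open Finset

/-- A (non-stationary) policy for a finite episodic MDP: for each state `s` and
(0-indexed) step `h` a probability distribution over actions. -/
structure EpiPolicy (S A : Type) [Fintype A] where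
  p : S → ℕ → A → ℝ
  nonneg : ∀ s h a, 0 ≤ p s h a
  sum_one : ∀ s h, ∑ a, p s h a = 1

/-- Step-`h` state-action occupancy measure (0-indexed: `occ P μ π 0` is `d_1^π`,
`occ P μ π h` is `d_{h+1}^π`). -/
noncomputable def occ {S A : Type} [Fintype S] [Fintype A]
    (P : ℕ → S → A → S → ℝ) (μ : S → ℝ) (π : EpiPolicy S A) : ℕ → S × A → ℝ
  | 0 => fun q => μ q.1 * π.p q.1 0 q.2
  | h + 1 => fun q =>
      ∑ q' : S × A, occ P μ π h q' * P h q'.1 q'.2 q.1 * π.p q.1 (h + 1) q.2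

/-- **Simultaneous realization of mixture occupancies by a Markov policy.**
For any two policies `π₁, π₂` and any `λ ∈ [0,1]` there is a single policy `π` whose
occupancy at every step `h ∈ {1,…,H}` (0-indexed: `h < H`) and every state-action
pair is the corresponding mixture. -/
theorem mixture_occupancy_simultaneous
    (S A : Type) [Fintype S] [Fintype A]
    (H : ℕ) (P : ℕ → S → A → S → ℝ) (μ : S → ℝ)
    (hP : ∀ h s a, (∀ s', 0 ≤ P h s a s') ∧ ∑ s', P h s a s' = 1)
    (hμ : (∀ s, 0 ≤ μ s) ∧ ∑ s, μ s = 1)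
    (π₁ π₂ : EpiPolicy S A) (lam : ℝ) (hlam : lam ∈ Set.Icc (0 : ℝ) 1) :
    ∃ π : EpiPolicy S A, ∀ h < H, ∀ q : S × A,
      occ P μ π h q = lam * occ P μ π₁ h q + (1 - lam) * occ P μ π₂ h q := by
  obtain ⟨hlam0, hlam1⟩ := hlam
  have hlam1' : (0:ℝ) ≤ 1 - lam := by linarith
  -- occupancies are nonnegative
  have hocc_nn : ∀ (π : EpiPolicy S A) h q, 0 ≤ occ P μ π h q := by
    intro π h
    induction h with
    | zero => intro q; exact mul_nonneg (hμ.1 q.1) (π.nonneg _ _ _)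
    | succ h ih =>
      intro q
      exact Finset.sum_nonneg fun q' _ =>
        mul_nonneg (mul_nonneg (ih q') ((hP h q'.1 q'.2).1 q.1)) (π.nonneg _ _ _)
  -- state occupancies
  set σ₁ : ℕ → S → ℝ := fun h s => ∑ a, occ P μ π₁ h (s, a) with hσ₁def
  set σ₂ : ℕ → S → ℝ := fun h s => ∑ a, occ P μ π₂ h (s, a) with hσ₂def
  set D : ℕ → S → ℝ := fun h s => lam * σ₁ h s + (1 - lam) * σ₂ h s with hDdef
  have hσ₁nn : ∀ h s, 0 ≤ σ₁ h s := fun h s =>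
    Finset.sum_nonneg fun a _ => hocc_nn π₁ h (s, a)
  have hσ₂nn : ∀ h s, 0 ≤ σ₂ h s := fun h s =>
    Finset.sum_nonneg fun a _ => hocc_nn π₂ h (s, a)
  have hDnn : ∀ h s, 0 ≤ D h s := fun h s =>
    add_nonneg (mul_nonneg hlam0 (hσ₁nn h s)) (mul_nonneg hlam1' (hσ₂nn h s))
  -- the mixed policy
  set pfun : S → ℕ → A → ℝ := fun s h a =>
    if D h s = 0 then π₁.p s h a
    else (lam * σ₁ h s * π₁.p s h a + (1 - lam) * σ₂ h s * π₂.p s h a) / D h s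
    with hpfun
  have hpnn : ∀ s h a, 0 ≤ pfun s h a := by
    intro s h a
    by_cases hd : D h s = 0
    · simp [hpfun, hd, π₁.nonneg]
    · simp only [hpfun, if_neg hd]
      apply div_nonneg _ (hDnn h s)
      exact add_nonneg (mul_nonneg (mul_nonneg hlam0 (hσ₁nn h s)) (π₁.nonneg _ _ _))
        (mul_nonneg (mul_nonneg hlam1' (hσ₂nn h s)) (π₂.nonneg _ _ _))
  have hps1 : ∀ s h, ∑ a, pfun s h a = 1 := by
    intro s h
    by_cases hd : D h s = 0
    · simp [hpfun, hd, π₁.sum_one]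
    · simp only [hpfun, if_neg hd]
      rw [← Finset.sum_div, div_eq_one_iff_eq hd]
      rw [Finset.sum_add_distrib, ← Finset.mul_sum, ← Finset.mul_sum,
        π₁.sum_one, π₂.sum_one, mul_one, mul_one]
  set π : EpiPolicy S A := ⟨pfun, hpnn, hps1⟩ with hπdef
  -- state occupancy recursion
  have hσsucc : ∀ (ρ : EpiPolicy S A) h s,
      (∑ a, occ P μ ρ (h+1) (s, a)) = ∑ q' : S × A, occ P μ ρ h q' * P h q'.1 q'.2 s := by
    intro ρ h s
    simp only [occ]
    rw [Finset.sum_comm]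
    refine Finset.sum_congr rfl fun q' _ => ?_
    rw [← Finset.mul_sum, ρ.sum_one, mul_one]
  have hoccsucc : ∀ (ρ : EpiPolicy S A) h s a,
      occ P μ ρ (h+1) (s, a) = (∑ q' : S × A, occ P μ ρ h q' * P h q'.1 q'.2 s) * ρ.p s (h+1) a := by
    intro ρ h s a
    simp only [occ, Finset.sum_mul]
  -- main claim
  have hmain : ∀ h (q : S × A),
      occ P μ π h q = lam * occ P μ π₁ h q + (1 - lam) * occ P μ π₂ h q := by
    intro h
    induction h with
    | zero =>
      intro ⟨s, a⟩
      have hσ1 : σ₁ 0 s = μ s := by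
        simp only [hσ₁def, occ, ← Finset.mul_sum, π₁.sum_one, mul_one]
      have hσ2 : σ₂ 0 s = μ s := by
        simp only [hσ₂def, occ, ← Finset.mul_sum, π₂.sum_one, mul_one]
      have hD0 : D 0 s = μ s := by simp only [hDdef, hσ1, hσ2]; ring
      show μ s * pfun s 0 a = lam * (μ s * π₁.p s 0 a) + (1 - lam) * (μ s * π₂.p s 0 a)
      by_cases hμs : μ s = 0
      · simp [hμs]
      · have hd : D 0 s ≠ 0 := by rw [hD0]; exact hμs
        simp only [hpfun, if_neg hd, hD0, hσ1, hσ2]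
        field_simp
    | succ h ih =>
      intro ⟨s, a⟩
      have hsum : (∑ q' : S × A, occ P μ π h q' * P h q'.1 q'.2 s) = D (h+1) s := by
        have e1 := hσsucc π₁ h s
        have e2 := hσsucc π₂ h s
        simp only [hDdef, hσ₁def, hσ₂def]
        rw [e1, e2, Finset.mul_sum, Finset.mul_sum, ← Finset.sum_add_distrib]
        refine Finset.sum_congr rfl fun q' _ => ?_
        rw [ih q']
        ring
      rw [hoccsucc π h s a, hoccsucc π₁ h s a, hoccsucc π₂ h s a, hsum]
      have e1 : (∑ q' : S × A, occ P μ π₁ h q' * P h q'.1 q'.2 s) = σ₁ (h+1) s :=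
        (hσsucc π₁ h s).symm
      have e2 : (∑ q' : S × A, occ P μ π₂ h q' * P h q'.1 q'.2 s) = σ₂ (h+1) s :=
        (hσsucc π₂ h s).symm
      rw [e1, e2]
      by_cases hd : D (h+1) s = 0
      · have h1 : lam * σ₁ (h+1) s = 0 := by
          have := hDnn (h+1) s
          have h1' := mul_nonneg hlam0 (hσ₁nn (h+1) s)
          have h2' := mul_nonneg hlam1' (hσ₂nn (h+1) s)
          simp only [hDdef] at hd
          linarith
        have h2 : (1 - lam) * σ₂ (h+1) s = 0 := by
          have h1' := mul_nonneg hlam0 (hσ₁nn (h+1) s)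
          have h2' := mul_nonneg hlam1' (hσ₂nn (h+1) s)
          simp only [hDdef] at hd
          linarith
        rw [hd]
        show (0:ℝ) * π.p s (h+1) a = _
        rw [zero_mul]
        have : lam * (σ₁ (h+1) s * π₁.p s (h+1) a) = 0 := by
          rw [← mul_assoc, h1, zero_mul]
        have h2'' : (1 - lam) * (σ₂ (h+1) s * π₂.p s (h+1) a) = 0 := by
          rw [← mul_assoc, h2, zero_mul]
        linarith
      · show D (h+1) s * pfun s (h+1) a = _
        simp only [hpfun, if_neg hd]
        field_simp
  exact ⟨π, fun h _ q => hmain h q⟩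
end

section
/- Finite-dimensional ratio bound at a Rényi entropy maximizer. Let n ≥ 1, α ∈ (0,1), δ > 0, and let K be a convex subset of the probability simplex Δ^n = {d ∈ ℝ^n : d_i ≥ 0, Σ_i d_i = 1}. Suppose z ∈ K maximizes the Rényi entropy H_α over K and z_i > 0 for all i. Then for every x ∈ K with x_1 ≥ δ, one has x_1 / z_1 ≤ n / δ^{α/(1−α)}, i.e., z_1 ≥ (δ^{α/(1−α)} / n) · x_1. -/
/-!
The function `F w = ∑ i, w i ^ α` is a monotone transform of `H_α`, so `z` maximizes `F` on `K`.
Since `z` lies in the interior of the orthant, `F` is differentiable at `z`, and the first-order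
optimality condition in the direction `x - z` reads `∑ i, x i * z i ^ (α - 1) ≤ F z`. By concavity
of `t ↦ t ^ α`, `F z ≤ n ^ (1 - α)`; keeping only the first term gives
`x₀ z₀ ^ (α - 1) ≤ n ^ (1 - α)`, which together with `x₀ ≥ δ` is rearranged into the ratio bound.
-/

open Finset

theorem sum_rpow_le_card_rpow_mul_rpow_sum {ι : Type*} (s : Finset ι) {p : ℝ} (hp0 : 0 ≤ p)
    (hp1 : p ≤ 1) {w : ι → ℝ} (hw : ∀ i ∈ s, 0 ≤ w i) :
    ∑ i ∈ s, w i ^ p ≤ (#s : ℝ) ^ (1 - p) * (∑ i ∈ s, w i) ^ p := by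
  rcases s.eq_empty_or_nonempty with rfl | hs
  · simp only [sum_empty]
    positivity
  have hc : (0 : ℝ) < #s := by exact_mod_cast hs.card_pos
  have jensen := (Real.concaveOn_rpow hp0 hp1).le_map_sum (t := s) (w := fun _ => (#s : ℝ)⁻¹)
    (p := w) (fun _ _ => by positivity) (by simp [hc.ne']) hw
  simp only [smul_eq_mul, ← mul_sum] at jensen
  rw [Real.mul_rpow (by positivity) (sum_nonneg hw), Real.inv_rpow hc.le] at jensen
  calc ∑ i ∈ s, w i ^ p = #s * ((#s : ℝ)⁻¹ * ∑ i ∈ s, w i ^ p) := by field_simp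
    _ ≤ #s * ((#s : ℝ) ^ p)⁻¹ * (∑ i ∈ s, w i) ^ p := by rw [mul_assoc]; gcongr
    _ = (#s : ℝ) ^ (1 - p) * (∑ i ∈ s, w i) ^ p := by
      rw [Real.rpow_sub hc, Real.rpow_one, div_eq_mul_inv]

theorem hasFDerivAt_sum_rpow {ι : Type*} [Fintype ι] (p : ℝ) {z : ι → ℝ} (hz : ∀ i, z i ≠ 0) :
    HasFDerivAt (fun w : ι → ℝ => ∑ i, w i ^ p)
      (∑ i, (p * z i ^ (p - 1)) • ContinuousLinearMap.proj (R := ℝ) (φ := fun _ : ι => ℝ) i) z :=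
  HasFDerivAt.fun_sum fun i _ => (hasFDerivAt_apply i z).rpow_const (Or.inl (hz i))

theorem IsMaxOn.sum_mul_rpow_sub_one_le_sum_rpow {ι : Type*} [Fintype ι] {p : ℝ} (hp : 0 < p)
    {K : Set (ι → ℝ)} (hK : Convex ℝ K) {z x : ι → ℝ} (hz : z ∈ K) (hx : x ∈ K)
    (hzpos : ∀ i, 0 < z i) (hmax : IsMaxOn (fun w : ι → ℝ => ∑ i, w i ^ p) K z) :
    ∑ i, x i * z i ^ (p - 1) ≤ ∑ i, z i ^ p := by
  have hfirst := hmax.localize.hasFDerivWithinAt_nonpos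
    (hasFDerivAt_sum_rpow p fun i => (hzpos i).ne').hasFDerivWithinAt
    (sub_mem_posTangentConeAt_of_segment_subset (hK.segment_subset hz hx))
  have hz_eq : ∀ i, z i * z i ^ (p - 1) = z i ^ p := fun i => by
    rw [Real.rpow_sub_one (hzpos i).ne']
    field_simp [(hzpos i).ne']
  have hderiv : ∑ i, p * z i ^ (p - 1) * (x i - z i)
      = p * (∑ i, x i * z i ^ (p - 1) - ∑ i, z i ^ p) := by
    simp only [← hz_eq, mul_sum, ← sum_sub_distrib]
    exact sum_congr rfl fun i _ => by ring
  have hfirst' : ∑ i, p * z i ^ (p - 1) * (x i - z i) ≤ 0 := by simpa using hfirst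
  rw [hderiv] at hfirst'
  linarith [nonpos_of_mul_nonpos_right hfirst' hp]

theorem sum_rpow_pos_of_mem_stdSimplex {ι : Type*} [Fintype ι] (p : ℝ) {w : ι → ℝ}
    (hw : w ∈ stdSimplex ℝ ι) : 0 < ∑ i, w i ^ p := by
  obtain ⟨i, hi⟩ : ∃ i, 0 < w i := by
    by_contra! h
    have := sum_nonpos fun i (_ : i ∈ univ) => h i
    linarith [hw.2]
  exact (Real.rpow_pos_of_pos hi p).trans_le
    (single_le_sum (fun j _ => Real.rpow_nonneg (hw.1 j) p) (mem_univ i))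

theorem div_le_div_rpow_of_mul_rpow_sub_one_le {α δ x z c : ℝ} (hα0 : 0 ≤ α) (hα1 : α < 1)
    (hδ : 0 < δ) (hδx : δ ≤ x) (hz : 0 < z) (hc : 0 ≤ c) (h : x * z ^ (α - 1) ≤ c ^ (1 - α)) :
    x / z ≤ c / δ ^ (α / (1 - α)) := by
  have hx : 0 < x := hδ.trans_le hδx
  have h1α : 0 < 1 - α := sub_pos.2 hα1
  -- `x * z ^ (α - 1) = x ^ α * (x / z) ^ (1 - α)`, and `x ^ α ≥ δ ^ α`.
  refine (Real.rpow_le_rpow_iff (by positivity) (by positivity) h1α).1 ?_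
  calc (x / z) ^ (1 - α) = x * z ^ (α - 1) / x ^ α := by
        rw [Real.div_rpow hx.le hz.le, Real.rpow_sub hx, Real.rpow_one, ← neg_sub α 1,
          Real.rpow_neg hz.le]
        field_simp
    _ ≤ c ^ (1 - α) / δ ^ α := by
        gcongr
    _ = (c / δ ^ (α / (1 - α))) ^ (1 - α) := by
        rw [Real.div_rpow hc (by positivity), ← Real.rpow_mul hδ.le, div_mul_cancel₀ _ h1α.ne']

/-- **Finite-dimensional ratio bound at a Rényi entropy maximizer.**
If `z` maximizes the Rényi entropy `H_α` (with `α ∈ (0,1)`) over a convex subset `K`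
of the probability simplex `Δ^n`, `z` has full support, and `x ∈ K` has first
coordinate `x 0 ≥ δ > 0`, then `x 0 / z 0 ≤ n / δ ^ (α/(1-α))`. -/
theorem renyi_maximizer_ratio_bound
    (n : ℕ) (hn : 1 ≤ n) (α : ℝ) (hα : α ∈ Set.Ioo (0 : ℝ) 1) (δ : ℝ) (hδ : 0 < δ)
    (K : Set (Fin n → ℝ)) (hK : Convex ℝ K) (hKsub : K ⊆ stdSimplex ℝ (Fin n))
    (z : Fin n → ℝ) (hz : z ∈ K) (hzpos : ∀ i, 0 < z i)
    (hmax : ∀ x ∈ K,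
      (1 / (1 - α)) * Real.log (∑ i, x i ^ α) ≤ (1 / (1 - α)) * Real.log (∑ i, z i ^ α)) :
    ∀ x ∈ K, δ ≤ x ⟨0, hn⟩ →
      x ⟨0, hn⟩ / z ⟨0, hn⟩ ≤ (n : ℝ) / δ ^ (α / (1 - α)) := by
  obtain ⟨hα0, hα1⟩ := hα
  intro x hx hδx
  have hpowmax : IsMaxOn (fun w : Fin n → ℝ => ∑ i, w i ^ α) K z := fun d hd =>
    (Real.log_le_log_iff (sum_rpow_pos_of_mem_stdSimplex α (hKsub hd))
      (sum_rpow_pos_of_mem_stdSimplex α (hKsub hz))).1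
      (le_of_mul_le_mul_left (hmax d hd) (by simpa using hα1))
  have hpow_le : ∑ i, z i ^ α ≤ (n : ℝ) ^ (1 - α) := by
    simpa [(hKsub hz).2] using
      sum_rpow_le_card_rpow_mul_rpow_sum univ hα0.le hα1.le fun i _ => (hzpos i).le
  have hfirst := hpowmax.sum_mul_rpow_sub_one_le_sum_rpow hα0 hK hz hx hzpos
  refine div_le_div_rpow_of_mul_rpow_sub_one_le hα0.le hα1 hδ hδx (hzpos _) n.cast_nonneg ?_
  refine (single_le_sum (f := fun i => x i * z i ^ (α - 1)) (fun i _ => ?_) (mem_univ _)).trans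
    (hfirst.trans hpow_le)
  exact mul_nonneg ((hKsub hx).1 i) (Real.rpow_nonneg (hzpos i).le _)
end

section
/- Occupancy ratio bound for the max-Rényi exploration mixture (Lemma B.3). In the finite episodic MDP setting, fix α ∈ (0,1) and δ > 0. For each t ∈ {1,…,H}, let π^{(t)} be a policy maximizing the Rényi entropy H_α(d_t^π) over all policies π, and define μ_h(s,a) = (1/H) Σ_{t=1}^H d_h^{π^{(t)}}(s,a). Then for every step h ∈ {1,…,H}, every (s,a) ∈ 𝒮×𝒜, and every policy π' with d_h^{π'}(s,a) ≥ δ, it holds that d_h^{π'}(s,a) ≤ (S·A·H / δ^{α/(1−α)}) · μ_h(s,a). -/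
/-!
Let `d` be the step-`h` occupancy of the Rényi maximizer for step `h` and `d'` that of `π'`.
Occupancy measures form a convex set (a flow obeying the Bellman constraints is the occupancy of
its own conditional policy), so `∑ x ^ α`, maximal at `d`, does not increase along the segment
from `d` to `d'`. The first-order condition at `d` reads `∑ d'ₓ dₓ ^ (α - 1) ≤ ∑ dₓ ^ α`, and
`∑ dₓ ^ α ≤ (SA) ^ (1 - α)` by concavity, hence `d'_q ≤ (SA d_q) ^ (1 - α)`. With `δ ≤ d'_q` this
gives `d'_q δ ^ (α / (1 - α)) ≤ SA d_q`, and `d_q` is one of the `H` terms of the mixture.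
-/

open Finset

/-- Rényi entropy of order `α` of a distribution on a finite type (real powers). -/
noncomputable def renyiEnt {X : Type} [Fintype X] (α : ℝ) (d : X → ℝ) : ℝ :=
  (1 / (1 - α)) * Real.log (∑ x, d x ^ α)

open Filter Topology

namespace Real

lemma rpow_le_rpow_add_mul_sub {α a b : ℝ} (hα₀ : 0 ≤ α) (hα₁ : α ≤ 1) (ha : 0 < a)
    (hb : 0 ≤ b) : b ^ α ≤ a ^ α + α * a ^ (α - 1) * (b - a) := by
  have hbern := rpow_one_add_le_one_add_mul_self (s := b / a - 1)
    (by linarith [div_nonneg hb ha.le]) hα₀ hα₁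
  rw [add_sub_cancel, div_rpow hb ha.le] at hbern
  have haα : 0 < a ^ α := rpow_pos_of_pos ha α
  calc b ^ α = a ^ α * (b ^ α / a ^ α) := by field_simp
    _ ≤ a ^ α * (1 + α * (b / a - 1)) := by gcongr
    _ = a ^ α + α * a ^ (α - 1) * (b - a) := by
      rw [rpow_sub_one ha.ne']
      field_simp

end Real

section SumRpow

variable {X : Type*} [Fintype X] {α : ℝ} {d d' : X → ℝ}

lemma sum_rpow_le_card_rpow_one_sub [Nonempty X] (hα₀ : 0 ≤ α) (hα₁ : α ≤ 1)
    (hd₀ : ∀ x, 0 ≤ d x) (hd₁ : ∑ x, d x = 1) :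
    ∑ x, d x ^ α ≤ (Fintype.card X : ℝ) ^ (1 - α) := by
  set N : ℝ := (Fintype.card X : ℝ)
  have hN : 0 < N := by positivity
  calc ∑ x, d x ^ α ≤ ∑ x, (N⁻¹ ^ α + α * N⁻¹ ^ (α - 1) * (d x - N⁻¹)) :=
        sum_le_sum fun x _ => Real.rpow_le_rpow_add_mul_sub hα₀ hα₁ (inv_pos.2 hN) (hd₀ x)
    _ = N * N⁻¹ ^ α := by
        rw [sum_add_distrib, ← mul_sum, sum_sub_distrib, hd₁]
        simp [N, hN.ne']
    _ = N ^ (1 - α) := by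
        rw [Real.inv_rpow hN.le, Real.rpow_sub hN, Real.rpow_one, div_eq_mul_inv]

lemma sum_rpow_pos_of_sum_eq_one (hd : ∀ x, 0 ≤ d x) (hd₁ : ∑ x, d x = 1) :
    0 < ∑ x, d x ^ α := by
  obtain ⟨x, -, hx⟩ := exists_ne_zero_of_sum_ne_zero (hd₁.trans_ne one_ne_zero)
  exact (Real.rpow_pos_of_pos ((hd x).lt_of_ne' hx) α).trans_le
    (single_le_sum (f := fun x => d x ^ α) (fun y _ => Real.rpow_nonneg (hd y) α) (mem_univ x))

lemma sum_rpow_sub_one_mul_le_sum_rpow_of_sum_rpow_le (hα₀ : 0 < α) (hα₁ : α ≤ 1)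
    (hd : ∀ x, 0 ≤ d x) (hd' : ∀ x, 0 ≤ d' x) {l : ℝ} (hl₀ : 0 < l) (hl₁ : l < 1)
    (hle : ∑ x, ((1 - l) * d x + l * d' x) ^ α ≤ ∑ x, d x ^ α) :
    ∑ x, ((1 - l) * d x + l * d' x) ^ (α - 1) * d' x ≤ ∑ x, ((1 - l) * d x + l * d' x) ^ α := by
  -- Summing the tangent lines of `t ↦ t ^ α` at `m` shows that the weights `w = m ^ (α - 1)` give
  -- `⟪w, m⟫ ≤ ⟪w, d⟫`; as `m` lies between `d` and `d'`, also `⟪w, d'⟫ ≤ ⟪w, m⟫ = ∑ m ^ α`.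
  set m : X → ℝ := fun x => (1 - l) * d x + l * d' x
  set w : X → ℝ := fun x => m x ^ (α - 1)
  have hm : ∀ x, 0 ≤ m x := fun x => by have := hd x; have := hd' x; positivity
  have tangent : ∑ x, d x ^ α ≤ ∑ x, m x ^ α + α * (∑ x, w x * d x - ∑ x, w x * m x) := by
    rw [← sum_sub_distrib, mul_sum, ← sum_add_distrib]
    refine sum_le_sum fun x _ => ?_
    rcases (hm x).eq_or_lt with hmx | hmx
    · have hdx : d x = 0 := by nlinarith [hd x, hd' x]
      simp [hdx, ← hmx, Real.zero_rpow hα₀.ne']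
    · linarith [Real.rpow_le_rpow_add_mul_sub hα₀.le hα₁ hmx (hd x)]
  have hwm : ∑ x, w x * m x = ∑ x, m x ^ α :=
    sum_congr rfl fun x _ => by
      rw [← Real.rpow_add_one' (hm x) (by simpa using hα₀.ne'), sub_add_cancel]
  have hlin : ∑ x, w x * m x = (1 - l) * ∑ x, w x * d x + l * ∑ x, w x * d' x := by
    simp only [m, mul_sum, ← sum_add_distrib]
    exact sum_congr rfl fun x _ => by ring
  have hwm_le_wd : ∑ x, w x * m x ≤ ∑ x, w x * d x := by
    have : 0 ≤ α * (∑ x, w x * d x - ∑ x, w x * m x) := by linarith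
    linarith [nonneg_of_mul_nonneg_right this hα₀]
  have hwd'_le_wd : ∑ x, w x * d' x ≤ ∑ x, w x * d x :=
    le_of_mul_le_mul_left (by linarith) hl₀
  rw [← hwm]
  nlinarith

lemma le_sum_rpow_mul_rpow_one_sub_of_forall_sum_rpow_le (hα₀ : 0 < α) (hα₁ : α < 1)
    (hd : ∀ x, 0 ≤ d x) (hd' : ∀ x, 0 ≤ d' x)
    (hmax : ∀ l ∈ Set.Ioo (0 : ℝ) 1, ∑ x, ((1 - l) * d x + l * d' x) ^ α ≤ ∑ x, d x ^ α)
    (q : X) : d' q ≤ (∑ x, d x ^ α) * d q ^ (1 - α) := by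
  set K := ∑ x, d x ^ α
  have hK : 0 ≤ K := sum_nonneg fun x _ => Real.rpow_nonneg (hd x) α
  have bound : ∀ l ∈ Set.Ioo (0 : ℝ) 1, d' q ≤ K * ((1 - l) * d q + l * d' q) ^ (1 - α) := by
    rintro l ⟨hl₀, hl₁⟩
    set mq := (1 - l) * d q + l * d' q
    rcases (hd' q).eq_or_lt with hq | hq
    · rw [← hq]
      exact mul_nonneg hK (Real.rpow_nonneg (by have := hd q; positivity) _)
    have hmq : 0 < mq :=
      add_pos_of_nonneg_of_pos (mul_nonneg (by linarith) (hd q)) (mul_pos hl₀ hq)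
    have hterm : mq ^ (α - 1) * d' q ≤ K :=
      calc mq ^ (α - 1) * d' q ≤ ∑ x, ((1 - l) * d x + l * d' x) ^ (α - 1) * d' x :=
            single_le_sum (f := fun x => ((1 - l) * d x + l * d' x) ^ (α - 1) * d' x)
              (fun x _ => by have := hd x; have := hd' x; positivity) (mem_univ q)
        _ ≤ ∑ x, ((1 - l) * d x + l * d' x) ^ α :=
            sum_rpow_sub_one_mul_le_sum_rpow_of_sum_rpow_le hα₀ hα₁.le hd hd' hl₀ hl₁
              (hmax l ⟨hl₀, hl₁⟩)
        _ ≤ K := hmax l ⟨hl₀, hl₁⟩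
    calc d' q = mq ^ (1 - α) * (mq ^ (α - 1) * d' q) := by
          rw [← mul_assoc, ← Real.rpow_add hmq]; simp
      _ ≤ mq ^ (1 - α) * K := by gcongr
      _ = K * mq ^ (1 - α) := mul_comm _ _
  have hlim : Tendsto (fun l : ℝ => K * ((1 - l) * d q + l * d' q) ^ (1 - α)) (𝓝[>] 0)
      (𝓝 (K * d q ^ (1 - α))) := by
    have hcont : ContinuousAt (fun l : ℝ => K * ((1 - l) * d q + l * d' q) ^ (1 - α)) 0 := by
      fun_prop (disch := exact Or.inr (by linarith))
    simpa using hcont.tendsto.mono_left nhdsWithin_le_nhds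
  exact ge_of_tendsto hlim (eventually_of_mem (Ioo_mem_nhdsGT one_pos) bound)

end SumRpow

section Normalize

variable {A : Type} [Fintype A]

noncomputable def normalizeOrUniform (f : A → ℝ) (a : A) : ℝ :=
  if 0 < ∑ b, f b then f a / ∑ b, f b else (Fintype.card A : ℝ)⁻¹

lemma normalizeOrUniform_nonneg {f : A → ℝ} (hf : ∀ a, 0 ≤ f a) (a : A) :
    0 ≤ normalizeOrUniform f a := by
  unfold normalizeOrUniform
  split_ifs with hpos
  · exact div_nonneg (hf a) hpos.le
  · positivity

lemma sum_normalizeOrUniform [Nonempty A] (f : A → ℝ) : ∑ a, normalizeOrUniform f a = 1 := by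
  unfold normalizeOrUniform
  split_ifs with hpos
  · rw [← sum_div, div_self hpos.ne']
  · simp

lemma sum_mul_normalizeOrUniform {f : A → ℝ} (hf : ∀ a, 0 ≤ f a) (a : A) :
    (∑ b, f b) * normalizeOrUniform f a = f a := by
  unfold normalizeOrUniform
  split_ifs with hpos
  · exact mul_div_cancel₀ _ hpos.ne'
  · have hzero := le_antisymm (not_lt.1 hpos) (sum_nonneg fun b _ => hf b)
    rw [hzero, zero_mul, (sum_eq_zero_iff_of_nonneg fun b _ => hf b).1 hzero a (mem_univ a)]

end Normalize

section Occupancy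

variable {S A : Type} [Fintype S] [Fintype A] (P : ℕ → S → A → S → ℝ) (μ : S → ℝ)

noncomputable def inflow (m : ℕ → S × A → ℝ) : ℕ → S → ℝ
  | 0 => μ
  | h + 1 => fun s => ∑ q : S × A, m h q * P h q.1 q.2 s

lemma occ_eq_inflow_mul (π : EpiPolicy S A) (h : ℕ) (s : S) (a : A) :
    occ P μ π h (s, a) = inflow P μ (occ P μ π) h s * π.p s h a := by
  cases h with
  | zero => rfl
  | succ h => exact (sum_mul ..).symm

lemma sum_occ_eq_inflow (π : EpiPolicy S A) (h : ℕ) (s : S) :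
    ∑ a, occ P μ π h (s, a) = inflow P μ (occ P μ π) h s := by
  simp only [occ_eq_inflow_mul, ← mul_sum, π.sum_one, mul_one]

lemma inflow_mix (m₁ m₂ : ℕ → S × A → ℝ) (c₁ c₂ : ℝ) (hc : c₁ + c₂ = 1) (h : ℕ) (s : S) :
    inflow P μ (fun k q => c₁ * m₁ k q + c₂ * m₂ k q) h s
      = c₁ * inflow P μ m₁ h s + c₂ * inflow P μ m₂ h s := by
  cases h with
  | zero => simp only [inflow]; linear_combination (-μ s) * hc
  | succ h =>
    simp only [inflow, mul_sum, ← sum_add_distrib]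
    exact sum_congr rfl fun q _ => by ring

variable {P μ}

lemma occ_nonneg (hP : ∀ h s a s', 0 ≤ P h s a s') (hμ : ∀ s, 0 ≤ μ s) (π : EpiPolicy S A) :
    ∀ h q, 0 ≤ occ P μ π h q := by
  intro h
  induction h with
  | zero => exact fun q => mul_nonneg (hμ q.1) (π.nonneg ..)
  | succ h ih =>
    exact fun q => sum_nonneg fun q' _ =>
      mul_nonneg (mul_nonneg (ih q') (hP ..)) (π.nonneg ..)

lemma sum_occ_eq_one (hP : ∀ h s a, ∑ s', P h s a s' = 1) (hμ : ∑ s, μ s = 1)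
    (π : EpiPolicy S A) (h : ℕ) : ∑ q, occ P μ π h q = 1 := by
  rw [Fintype.sum_prod_type]
  simp only [sum_occ_eq_inflow]
  induction h with
  | zero => exact hμ
  | succ h ih =>
    rw [← ih, inflow, sum_comm]
    simp only [← mul_sum, hP, mul_one, Fintype.sum_prod_type, sum_occ_eq_inflow]

noncomputable def EpiPolicy.ofFlow [Nonempty A] (m : ℕ → S × A → ℝ) (hm : ∀ h q, 0 ≤ m h q) :
    EpiPolicy S A where
  p s h := normalizeOrUniform fun a => m h (s, a)
  nonneg s h := normalizeOrUniform_nonneg fun a => hm h (s, a)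
  sum_one _ _ := sum_normalizeOrUniform _

lemma occ_ofFlow [Nonempty A] {m : ℕ → S × A → ℝ} (hm : ∀ h q, 0 ≤ m h q)
    (hflow : ∀ h s, ∑ a, m h (s, a) = inflow P μ m h s) :
    occ P μ (EpiPolicy.ofFlow m hm) = m := by
  funext h
  induction h with
  | zero =>
    funext ⟨s, a⟩
    rw [occ_eq_inflow_mul, show inflow P μ (occ P μ _) 0 s = inflow P μ m 0 s from rfl, ← hflow]
    exact sum_mul_normalizeOrUniform (fun b => hm 0 (s, b)) a
  | succ h ih =>
    funext ⟨s, a⟩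
    rw [occ_eq_inflow_mul, show inflow P μ (occ P μ _) (h + 1) s = inflow P μ m (h + 1) s by
      simp only [inflow, ih], ← hflow]
    exact sum_mul_normalizeOrUniform (fun b => hm (h + 1) (s, b)) a

lemma exists_occ_eq_mix [Nonempty A] (hP : ∀ h s a s', 0 ≤ P h s a s') (hμ : ∀ s, 0 ≤ μ s)
    (π₁ π₂ : EpiPolicy S A) {l : ℝ} (hl₀ : 0 ≤ l) (hl₁ : l ≤ 1) :
    ∃ π : EpiPolicy S A,
      occ P μ π = fun h q => (1 - l) * occ P μ π₁ h q + l * occ P μ π₂ h q := by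
  have hm : ∀ h q, 0 ≤ (1 - l) * occ P μ π₁ h q + l * occ P μ π₂ h q := fun h q =>
    add_nonneg (mul_nonneg (by linarith) (occ_nonneg hP hμ π₁ h q))
      (mul_nonneg hl₀ (occ_nonneg hP hμ π₂ h q))
  refine ⟨EpiPolicy.ofFlow _ hm, occ_ofFlow hm fun h s => ?_⟩
  rw [inflow_mix P μ _ _ _ _ (by ring), sum_add_distrib, ← mul_sum, ← mul_sum,
    sum_occ_eq_inflow, sum_occ_eq_inflow]

end Occupancy

lemma sum_rpow_le_sum_rpow_of_renyiEnt_le {X : Type} [Fintype X] {α : ℝ} (hα : α < 1)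
    {d d' : X → ℝ}
    (hd : 0 < ∑ x, d x ^ α) (hd' : 0 < ∑ x, d' x ^ α) (h : renyiEnt α d ≤ renyiEnt α d') :
    ∑ x, d x ^ α ≤ ∑ x, d' x ^ α := by
  have hc : 0 < 1 / (1 - α) := by rw [one_div_pos]; linarith
  exact (Real.log_le_log_iff hd hd').1 ((mul_le_mul_iff_right₀ hc).1 h)

lemma mul_rpow_div_one_sub_le {α δ x c : ℝ} (hα₀ : 0 ≤ α) (hα₁ : α < 1) (hδ : 0 < δ)
    (hδx : δ ≤ x) (hc : 0 ≤ c) (hx : x ≤ c ^ (1 - α)) : x * δ ^ (α / (1 - α)) ≤ c := by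
  have h1α : 0 < 1 - α := by linarith
  have hx₀ : 0 < x := hδ.trans_le hδx
  calc x * δ ^ (α / (1 - α)) ≤ x * x ^ (α / (1 - α)) := by gcongr
    _ = x ^ (1 - α)⁻¹ := by
        rw [← Real.rpow_one_add' hx₀.le (by positivity)]
        congr 1
        field_simp
        ring
    _ ≤ (c ^ (1 - α)) ^ (1 - α)⁻¹ := by gcongr
    _ = c := by rw [← Real.rpow_mul hc, mul_inv_cancel₀ h1α.ne', Real.rpow_one]

lemma occ_mul_rpow_le_card_mul_occ_of_isMax_renyiEnt {S A : Type} [Fintype S] [Fintype A]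
    {P : ℕ → S → A → S → ℝ} {μ : S → ℝ} (hP₀ : ∀ h s a s', 0 ≤ P h s a s')
    (hP₁ : ∀ h s a, ∑ s', P h s a s' = 1) (hμ₀ : ∀ s, 0 ≤ μ s) (hμ₁ : ∑ s, μ s = 1)
    {α δ : ℝ} (hα₀ : 0 < α) (hα₁ : α < 1) (hδ : 0 < δ) {n : ℕ} {π : EpiPolicy S A}
    (hπ : ∀ π' : EpiPolicy S A, renyiEnt α (occ P μ π' n) ≤ renyiEnt α (occ P μ π n))
    (π' : EpiPolicy S A) (q : S × A) (hq : δ ≤ occ P μ π' n q) :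
    occ P μ π' n q * δ ^ (α / (1 - α)) ≤ Fintype.card (S × A) * occ P μ π n q := by
  have : Nonempty A := ⟨q.2⟩
  have : Nonempty (S × A) := ⟨q⟩
  have hd := occ_nonneg hP₀ hμ₀ π n
  have hpos : ∀ ρ : EpiPolicy S A, 0 < ∑ x, occ P μ ρ n x ^ α := fun ρ =>
    sum_rpow_pos_of_sum_eq_one (occ_nonneg hP₀ hμ₀ ρ n) (sum_occ_eq_one hP₁ hμ₁ ρ n)
  have hsegment : ∀ l ∈ Set.Ioo (0 : ℝ) 1,
      ∑ x, ((1 - l) * occ P μ π n x + l * occ P μ π' n x) ^ α ≤ ∑ x, occ P μ π n x ^ α := by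
    rintro l ⟨hl₀, hl₁⟩
    obtain ⟨πl, hπl⟩ := exists_occ_eq_mix hP₀ hμ₀ π π' hl₀.le hl₁.le
    simpa only [hπl] using sum_rpow_le_sum_rpow_of_renyiEnt_le hα₁ (hpos πl) (hpos π) (hπ πl)
  refine mul_rpow_div_one_sub_le hα₀.le hα₁ hδ hq (by have := hd q; positivity) ?_
  calc occ P μ π' n q ≤ (∑ x, occ P μ π n x ^ α) * occ P μ π n q ^ (1 - α) :=
        le_sum_rpow_mul_rpow_one_sub_of_forall_sum_rpow_le hα₀ hα₁ hd
          (occ_nonneg hP₀ hμ₀ π' n) hsegment q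
    _ ≤ (Fintype.card (S × A) : ℝ) ^ (1 - α) * occ P μ π n q ^ (1 - α) :=
        mul_le_mul_of_nonneg_right
          (sum_rpow_le_card_rpow_one_sub hα₀.le hα₁.le hd (sum_occ_eq_one hP₁ hμ₁ π n))
          (Real.rpow_nonneg (hd q) _)
    _ = (Fintype.card (S × A) * occ P μ π n q) ^ (1 - α) :=
        (Real.mul_rpow (by positivity) (hd q)).symm

/-- **Occupancy ratio bound for the max-Rényi exploration mixture (Lemma B.3).**
If `π^{(t)}` maximizes the Rényi entropy of the step-`t` occupancy for each `t`, and
`μ_h = (1/H) ∑_t d_h^{π^{(t)}}`, then every policy `π'` with `d_h^{π'}(s,a) ≥ δ`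
satisfies `d_h^{π'}(s,a) ≤ (S·A·H / δ^{α/(1-α)}) · μ_h(s,a)`. -/
theorem max_renyi_occupancy_ratio_bound
    (S A : Type) [Fintype S] [Fintype A]
    (H : ℕ) (P : ℕ → S → A → S → ℝ) (μ : S → ℝ)
    (hP : ∀ h s a, (∀ s', 0 ≤ P h s a s') ∧ ∑ s', P h s a s' = 1)
    (hμ : (∀ s, 0 ≤ μ s) ∧ ∑ s, μ s = 1)
    (α δ : ℝ) (hα : α ∈ Set.Ioo (0 : ℝ) 1) (hδ : 0 < δ)
    (πt : Fin H → EpiPolicy S A)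
    (hmax : ∀ t : Fin H, ∀ π' : EpiPolicy S A,
      renyiEnt α (occ P μ π' t) ≤ renyiEnt α (occ P μ (πt t) t)) :
    ∀ (h : Fin H) (q : S × A) (π' : EpiPolicy S A), δ ≤ occ P μ π' h q →
      occ P μ π' h q ≤
        ((Fintype.card S : ℝ) * (Fintype.card A) * H / δ ^ (α / (1 - α))) *
          ((1 / (H : ℝ)) * ∑ t : Fin H, occ P μ (πt t) h q) := by
  intro h q π' hq
  have hP₀ : ∀ h s a s', 0 ≤ P h s a s' := fun h s a => (hP h s a).1
  have hstep := occ_mul_rpow_le_card_mul_occ_of_isMax_renyiEnt hP₀ (fun h s a => (hP h s a).2)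
    hμ.1 hμ.2 hα.1 hα.2 hδ (hmax h) π' q hq
  rw [Fintype.card_prod, Nat.cast_mul] at hstep
  have hH : (0 : ℝ) < H := by exact_mod_cast h.pos
  have hmix : occ P μ (πt h) h q ≤ ∑ t : Fin H, occ P μ (πt t) h q :=
    single_le_sum (f := fun t => occ P μ (πt t) h q)
      (fun t _ => occ_nonneg hP₀ hμ.1 (πt t) h q) (mem_univ h)
  calc occ P μ π' h q
      ≤ (Fintype.card S : ℝ) * Fintype.card A * occ P μ (πt h) h q / δ ^ (α / (1 - α)) :=
        (le_div_iff₀ (by positivity)).2 hstep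
    _ ≤ (Fintype.card S : ℝ) * Fintype.card A * (∑ t : Fin H, occ P μ (πt t) h q)
          / δ ^ (α / (1 - α)) := by gcongr
    _ = _ := by field_simp
end

section
/- Convergence of natural policy gradient (Lemma B.8). In the finite episodic MDP setting with rewards r_h : 𝒮×𝒜 → [0,1], define for any policy π the Q-functions Q_h^π(s,a) = r_h(s,a) + Σ_{s'} P_h(s'|s,a) V_{h+1}^π(s') and advantages A_h^π(s,a) = Q_h^π(s,a) − V_h^π(s). Fix a learning rate η > 0 and define the NPG iterates: π^{(0)}(·|s,h) uniform on 𝒜 for all s, h, and π^{(t+1)}(a|s,h) = π^{(t)}(a|s,h)·exp(η·A_h^{π^{(t)}}(s,a)) / Σ_{a'} π^{(t)}(a'|s,h)·exp(η·A_h^{π^{(t)}}(s,a')). Then for every T ≥ 1, the iterate π^{(T)} satisfies max_π J(π;r) − J(π^{(T)};r) ≤ H·log A/(η·T) + η·H². -/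
/-!
At every state and step, natural policy gradient is exponential weights with the advantages as
rewards. By the mirror-descent identity, the advantages of any comparator policy `π`, summed
over the iterations, are at most `(log A + ∑ t, log Z t) / η`; by Gibbs' inequality each
log-normalizer `log Z t` is at most `η` times the improvement of the value from one
iterate to the next, so they telescope to at most `η (H - h)`. Unrolling the performance
difference lemma over the steps bounds the cumulative value gap of `T + 1` iterations by
`H log A / η + H (H + 1) / 2`. The values of the iterates increase, so the gap of the last one
is at most the average; together with the trivial bound `H` this gives the rate.
-/

open Finset

/-- `valAux P r π k h s`: value of `π` at state `s` and (0-indexed) step `h` with `k`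
steps remaining; the value function at step `h` of a horizon-`H` MDP is
`valAux P r π (H - h) h`, and the return is `∑ s, μ s * valAux P r π H 0 s`. -/
noncomputable def valAux {S A : Type} [Fintype S] [Fintype A]
    (P : ℕ → S → A → S → ℝ) (r : ℕ → S → A → ℝ) (π : EpiPolicy S A) :
    ℕ → ℕ → S → ℝ
  | 0, _, _ => 0
  | k + 1, h, s =>
      ∑ a, π.p s h a * (r h s a + ∑ s', P h s a s' * valAux P r π k (h + 1) s')

/-- The advantage `A_h^π(s,a) = Q_h^π(s,a) − V_h^π(s)` of policy `π` at (0-indexed)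
step `h` in a horizon-`H` MDP. -/
noncomputable def adv {S A : Type} [Fintype S] [Fintype A]
    (H : ℕ) (P : ℕ → S → A → S → ℝ) (r : ℕ → S → A → ℝ) (π : EpiPolicy S A)
    (h : ℕ) (s : S) (a : A) : ℝ :=
  r h s a + (∑ s', P h s a s' * valAux P r π (H - (h + 1)) (h + 1) s') -
    valAux P r π (H - h) h s

lemma sum_mul_le_of_forall_le {ι : Type*} [Fintype ι] {w f : ι → ℝ} {c : ℝ}
    (hw0 : ∀ i, 0 ≤ w i) (hw1 : ∑ i, w i = 1) (hf : ∀ i, f i ≤ c) : ∑ i, w i * f i ≤ c :=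
  calc ∑ i, w i * f i ≤ ∑ i, w i * c := by gcongr with i; exacts [hw0 i, hf i]
    _ = c := by rw [← sum_mul, hw1, one_mul]

section ExpWeights

variable {ι : Type*} [Fintype ι] {η : ℝ} {p : ι → ℝ} (x : ι → ℝ)

noncomputable def expNormalizer (η : ℝ) (p x : ι → ℝ) : ℝ :=
  ∑ i, p i * Real.exp (η * x i)

noncomputable def expWeights (η : ℝ) (p x : ι → ℝ) (i : ι) : ℝ :=
  p i * Real.exp (η * x i) / expNormalizer η p x

lemma exp_mul_sum_le_expNormalizer (hp0 : ∀ i, 0 ≤ p i) (hp1 : ∑ i, p i = 1) :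
    Real.exp (η * ∑ i, p i * x i) ≤ expNormalizer η p x := by
  have := convexOn_exp.map_sum_le (t := univ) (w := p) (p := fun i => η * x i)
    (fun i _ => hp0 i) hp1 (fun _ _ => Set.mem_univ _)
  simpa only [smul_eq_mul, mul_sum, mul_left_comm η, expNormalizer] using this

lemma expNormalizer_pos (hp0 : ∀ i, 0 ≤ p i) (hp1 : ∑ i, p i = 1) :
    0 < expNormalizer η p x :=
  (Real.exp_pos _).trans_le (exp_mul_sum_le_expNormalizer x hp0 hp1)

lemma one_le_expNormalizer (hp0 : ∀ i, 0 ≤ p i) (hp1 : ∑ i, p i = 1)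
    (hx : ∑ i, p i * x i = 0) : 1 ≤ expNormalizer η p x := by
  simpa [hx] using exp_mul_sum_le_expNormalizer (η := η) x hp0 hp1

lemma expWeights_nonneg (hp0 : ∀ i, 0 ≤ p i) (hp1 : ∑ i, p i = 1) (i : ι) :
    0 ≤ expWeights η p x i :=
  div_nonneg (mul_nonneg (hp0 i) (Real.exp_pos _).le) (expNormalizer_pos x hp0 hp1).le

lemma expWeights_pos (hp0 : ∀ i, 0 ≤ p i) (hp1 : ∑ i, p i = 1) {i : ι} (hpi : 0 < p i) :
    0 < expWeights η p x i :=
  div_pos (mul_pos hpi (Real.exp_pos _)) (expNormalizer_pos x hp0 hp1)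

lemma sum_expWeights (hp0 : ∀ i, 0 ≤ p i) (hp1 : ∑ i, p i = 1) :
    ∑ i, expWeights η p x i = 1 := by
  simp only [expWeights, ← sum_div]
  exact div_self (expNormalizer_pos x hp0 hp1).ne'

lemma log_expWeights (hp0 : ∀ i, 0 ≤ p i) (hp1 : ∑ i, p i = 1) {i : ι} (hpi : 0 < p i) :
    Real.log (expWeights η p x i) =
      Real.log (p i) + η * x i - Real.log (expNormalizer η p x) := by
  rw [expWeights, Real.log_div (mul_pos hpi (Real.exp_pos _)).ne'
    (expNormalizer_pos x hp0 hp1).ne', Real.log_mul hpi.ne' (Real.exp_pos _).ne', Real.log_exp]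

/-- The mirror-descent identity: summed over the iterations of exponential weights, the left
side telescopes. -/
lemma sum_mul_log_expWeights_sub_log (hp : ∀ i, 0 < p i) (hp1 : ∑ i, p i = 1)
    {q : ι → ℝ} (hq : ∑ i, q i = 1) :
    ∑ i, q i * (Real.log (expWeights η p x i) - Real.log (p i)) =
      η * ∑ i, q i * x i - Real.log (expNormalizer η p x) := by
  calc ∑ i, q i * (Real.log (expWeights η p x i) - Real.log (p i))
      = ∑ i, (η * (q i * x i) - q i * Real.log (expNormalizer η p x)) :=
        sum_congr rfl fun i _ => by rw [log_expWeights x (fun j => (hp j).le) hp1 (hp i)]; ring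
    _ = _ := by rw [sum_sub_distrib, ← sum_mul, hq, one_mul, mul_sum]

lemma log_expNormalizer_le (hp0 : ∀ i, 0 ≤ p i) (hp1 : ∑ i, p i = 1) :
    Real.log (expNormalizer η p x) ≤ η * ∑ i, expWeights η p x i * x i := by
  have hZ : 0 < expNormalizer η p x := expNormalizer_pos x hp0 hp1
  -- Jensen for `exp` at the points `log Z - η x i`, weighted by `expWeights`: the right-hand
  -- side collapses to `∑ i, p i = 1`.
  have hJensen := convexOn_exp.map_sum_le (t := univ) (w := expWeights η p x)
    (p := fun i => Real.log (expNormalizer η p x) - η * x i)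
    (fun i _ => expWeights_nonneg x hp0 hp1 i) (sum_expWeights x hp0 hp1)
    (fun _ _ => Set.mem_univ _)
  have hterm i :
      expWeights η p x i • Real.exp (Real.log (expNormalizer η p x) - η * x i) = p i := by
    rw [smul_eq_mul, Real.exp_sub, Real.exp_log hZ, expWeights]
    field_simp
  simp only [hterm, hp1, Real.exp_le_one_iff, smul_eq_mul, mul_sub, sum_sub_distrib, ← sum_mul,
    sum_expWeights x hp0 hp1, one_mul] at hJensen
  simp only [mul_sum, mul_left_comm η]
  linarith

end ExpWeights

namespace EpiPolicy

variable {S A : Type} [Fintype A]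

lemma p_le_one (π : EpiPolicy S A) (s : S) (h : ℕ) (a : A) : π.p s h a ≤ 1 :=
  π.sum_one s h ▸ single_le_sum (fun b _ => π.nonneg s h b) (mem_univ a)

lemma nonempty_of_state (π : EpiPolicy S A) (s : S) : Nonempty A := by
  by_contra hA
  rw [not_nonempty_iff] at hA
  simpa using π.sum_one s 0

instance [Subsingleton A] : Subsingleton (EpiPolicy S A) where
  allEq π σ := by
    obtain ⟨p, -, hp⟩ := π
    obtain ⟨q, -, hq⟩ := σ
    congr
    funext s h a
    rw [← Fintype.sum_subsingleton (p s h) a, ← Fintype.sum_subsingleton (q s h) a, hp, hq]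

end EpiPolicy

section MDP

variable {S A : Type} [Fintype S] [Fintype A] {P : ℕ → S → A → S → ℝ} {r : ℕ → S → A → ℝ}

noncomputable def qAux (P : ℕ → S → A → S → ℝ) (r : ℕ → S → A → ℝ) (π : EpiPolicy S A)
    (k h : ℕ) (s : S) (a : A) : ℝ :=
  r h s a + ∑ s', P h s a s' * valAux P r π k (h + 1) s'

lemma valAux_succ (π : EpiPolicy S A) (k h : ℕ) (s : S) :
    valAux P r π (k + 1) h s = ∑ a, π.p s h a * qAux P r π k h s a :=
  rfl

lemma valAux_nonneg (hP : ∀ h s a s', 0 ≤ P h s a s') (hr : ∀ h s a, 0 ≤ r h s a)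
    (π : EpiPolicy S A) (k h : ℕ) (s : S) : 0 ≤ valAux P r π k h s := by
  induction k generalizing h s with
  | zero => simp [valAux]
  | succ k ih =>
    exact sum_nonneg fun a _ => mul_nonneg (π.nonneg s h a) <|
      add_nonneg (hr h s a) (sum_nonneg fun s' _ => mul_nonneg (hP h s a s') (ih _ _))

lemma valAux_le (hP : ∀ h s a, (∀ s', 0 ≤ P h s a s') ∧ ∑ s', P h s a s' = 1)
    (hr : ∀ h s a, r h s a ≤ 1) (π : EpiPolicy S A) (k h : ℕ) (s : S) :
    valAux P r π k h s ≤ k := by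
  induction k generalizing h s with
  | zero => simp [valAux]
  | succ k ih =>
    refine sum_mul_le_of_forall_le (π.nonneg s h) (π.sum_one s h) fun a => ?_
    have hnext := sum_mul_le_of_forall_le (hP h s a).1 (hP h s a).2 fun s' => ih (h + 1) s'
    rw [Nat.cast_succ, add_comm (k : ℝ)]
    exact add_le_add (hr h s a) hnext

variable {H k h : ℕ}

lemma adv_eq (hk : h + (k + 1) = H) (π : EpiPolicy S A) (s : S) (a : A) :
    adv H P r π h s a = qAux P r π k h s a - valAux P r π (k + 1) h s := by
  rw [adv, qAux, show H - (h + 1) = k by omega, show H - h = k + 1 by omega]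

lemma sum_mul_adv (hk : h + (k + 1) = H) (σ π : EpiPolicy S A) (s : S) :
    ∑ a, σ.p s h a * adv H P r π h s a =
      ∑ a, σ.p s h a * qAux P r π k h s a - valAux P r π (k + 1) h s := by
  simp only [adv_eq hk, mul_sub, sum_sub_distrib, ← sum_mul, σ.sum_one, one_mul]

lemma sum_mul_adv_self (hk : h + (k + 1) = H) (π : EpiPolicy S A) (s : S) :
    ∑ a, π.p s h a * adv H P r π h s a = 0 := by
  rw [sum_mul_adv hk, valAux_succ, sub_self]

/-- One step of the performance difference lemma. -/
lemma valAux_sub_valAux (hk : h + (k + 1) = H) (π σ : EpiPolicy S A) (s : S) :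
    valAux P r π (k + 1) h s - valAux P r σ (k + 1) h s =
      ∑ a, π.p s h a * adv H P r σ h s a +
        ∑ a, π.p s h a * ∑ s', P h s a s' *
          (valAux P r π k (h + 1) s' - valAux P r σ k (h + 1) s') := by
  simp only [sum_mul_adv hk, valAux_succ π, qAux, mul_sub, sum_sub_distrib, mul_add,
    sum_add_distrib]
  ring

end MDP

lemma le_npg_rate {L η T X : ℝ} {H : ℕ} (hL : 1 / 2 ≤ L) (hη : 0 < η) (hT : 1 ≤ T)
    (hXH : X ≤ H) (hXT : (T + 1) * X ≤ H * (L / η) + H * (H + 1) / 2) :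
    X ≤ H * L / (η * T) + η * H ^ 2 := by
  have hηT : 0 < η * T := by positivity
  rcases le_or_gt (η * T) L with hsmall | hlarge
  · have hH : (H : ℝ) ≤ H * L / (η * T) := by
      rw [le_div_iff₀ hηT]
      exact mul_le_mul_of_nonneg_left hsmall H.cast_nonneg
    nlinarith [sq_nonneg (H : ℝ)]
  rcases H.eq_zero_or_pos with rfl | hH
  · simpa using hXH
  have hH1 : (1 : ℝ) ≤ H := by exact_mod_cast hH
  -- with `x = η T > L`: `L + x² H - x (H + 1) / 2`
  --   `= (L - 1/2) + x (x - 1/2) (H - 1) + (x - 1/2)² + 1/4 ≥ 0`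
  have hkey : ((H : ℝ) + 1) / 2 ≤ L / (η * T) + η * T * H := by
    rw [← mul_le_mul_iff_right₀ hηT, mul_add, mul_div_cancel₀ _ hηT.ne']
    nlinarith [mul_nonneg (mul_nonneg hηT.le (by linarith : (0 : ℝ) ≤ η * T - 1 / 2))
      (by linarith : (0 : ℝ) ≤ H - 1), sq_nonneg (η * T - 1 / 2)]
  have hexpand : (T + 1) * (H * L / (η * T) + η * H ^ 2) =
      H * (L / η) + H * (L / (η * T) + η * T * H) + η * H ^ 2 := by
    field_simp
    ring
  refine le_of_mul_le_mul_left (hXT.trans ?_) (by linarith : (0 : ℝ) < T + 1)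
  rw [hexpand]
  nlinarith [sq_nonneg (H : ℝ)]

section NPG

variable {S A : Type} [Fintype S] [Fintype A] {H : ℕ} {P : ℕ → S → A → S → ℝ}
  {r : ℕ → S → A → ℝ} {η : ℝ} {πseq : ℕ → EpiPolicy S A}

def IsNPGSequence (H : ℕ) (P : ℕ → S → A → S → ℝ) (r : ℕ → S → A → ℝ) (η : ℝ)
    (πseq : ℕ → EpiPolicy S A) : Prop :=
  ∀ t s h, (πseq (t + 1)).p s h = expWeights η ((πseq t).p s h) (adv H P r (πseq t) h s)

namespace IsNPGSequence

lemma pos (hnpg : IsNPGSequence H P r η πseq)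
    (hinit : ∀ s h a, (πseq 0).p s h a = 1 / (Fintype.card A : ℝ))
    (t : ℕ) (s : S) (h : ℕ) (a : A) : 0 < (πseq t).p s h a := by
  induction t generalizing a with
  | zero =>
    have := (πseq 0).nonempty_of_state s
    rw [hinit]
    positivity
  | succ t ih =>
    rw [hnpg]
    exact expWeights_pos _ ((πseq t).nonneg s h) ((πseq t).sum_one s h) (ih a)

lemma valAux_add_log_expNormalizer_le (hnpg : IsNPGSequence H P r η πseq)
    (hP : ∀ h s a s', 0 ≤ P h s a s') (hη : 0 < η) {k h : ℕ} (hk : h + (k + 1) = H)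
    (t : ℕ) (s : S)
    (hnext : ∀ s', valAux P r (πseq t) k (h + 1) s' ≤ valAux P r (πseq (t + 1)) k (h + 1) s') :
    valAux P r (πseq t) (k + 1) h s +
        Real.log (expNormalizer η ((πseq t).p s h) (adv H P r (πseq t) h s)) / η ≤
      valAux P r (πseq (t + 1)) (k + 1) h s := by
  have hZ := log_expNormalizer_le (η := η) (adv H P r (πseq t) h s)
    ((πseq t).nonneg s h) ((πseq t).sum_one s h)
  rw [← hnpg t s h, ← div_le_iff₀' hη, sum_mul_adv hk] at hZ
  calc _ ≤ ∑ a, (πseq (t + 1)).p s h a * qAux P r (πseq t) k h s a := by linarith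
    _ ≤ _ := by
      rw [valAux_succ]
      gcongr with a
      · exact (πseq (t + 1)).nonneg s h a
      unfold qAux
      gcongr with s'
      exacts [hP h s a s', hnext s']

lemma valAux_le_valAux_succ (hnpg : IsNPGSequence H P r η πseq)
    (hP : ∀ h s a s', 0 ≤ P h s a s') (hη : 0 < η) {k h : ℕ} (hk : h + k = H)
    (t : ℕ) (s : S) : valAux P r (πseq t) k h s ≤ valAux P r (πseq (t + 1)) k h s := by
  induction k generalizing h s with
  | zero => simp [valAux]
  | succ k ih =>
    have hZ : 0 ≤ Real.log (expNormalizer η ((πseq t).p s h) (adv H P r (πseq t) h s)) / η :=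
      div_nonneg (Real.log_nonneg (one_le_expNormalizer _ ((πseq t).nonneg s h)
        ((πseq t).sum_one s h) (sum_mul_adv_self hk _ s))) hη.le
    linarith [hnpg.valAux_add_log_expNormalizer_le hP hη hk t s fun s' => ih (by omega) s']

lemma sum_log_expNormalizer_le (hnpg : IsNPGSequence H P r η πseq)
    (hP : ∀ h s a, (∀ s', 0 ≤ P h s a s') ∧ ∑ s', P h s a s' = 1)
    (hr : ∀ h s a, r h s a ∈ Set.Icc (0 : ℝ) 1) (hη : 0 < η) {k h : ℕ}
    (hk : h + (k + 1) = H) (N : ℕ) (s : S) :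
    ∑ t ∈ range N, Real.log (expNormalizer η ((πseq t).p s h) (adv H P r (πseq t) h s)) ≤
      η * (k + 1) := by
  have hP0 h s a := (hP h s a).1
  have htel := sum_le_sum fun t (_ : t ∈ range N) =>
    le_sub_iff_add_le'.2 (hnpg.valAux_add_log_expNormalizer_le hP0 hη hk t s
      fun s' => hnpg.valAux_le_valAux_succ hP0 hη (by omega) t s')
  rw [sum_range_sub (fun t => valAux P r (πseq t) (k + 1) h s), ← sum_div,
    div_le_iff₀' hη] at htel
  have hVN := valAux_le hP (fun h s a => (hr h s a).2) (πseq N) (k + 1) h s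
  have hV0 := valAux_nonneg hP0 (fun h s a => (hr h s a).1) (πseq 0) (k + 1) h s
  push_cast at hVN
  exact htel.trans (by gcongr; linarith)

lemma sum_sum_mul_adv_le (hnpg : IsNPGSequence H P r η πseq)
    (hinit : ∀ s h a, (πseq 0).p s h a = 1 / (Fintype.card A : ℝ))
    (hP : ∀ h s a, (∀ s', 0 ≤ P h s a s') ∧ ∑ s', P h s a s' = 1)
    (hr : ∀ h s a, r h s a ∈ Set.Icc (0 : ℝ) 1) (hη : 0 < η) {k h : ℕ}
    (hk : h + (k + 1) = H) (π : EpiPolicy S A) (N : ℕ) (s : S) :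
    ∑ t ∈ range N, ∑ a, π.p s h a * adv H P r (πseq t) h s a ≤
      Real.log (Fintype.card A) / η + (k + 1) := by
  have hlog t := sum_mul_log_expWeights_sub_log (η := η) (adv H P r (πseq t) h s)
    (hnpg.pos hinit t s h) ((πseq t).sum_one s h) (π.sum_one s h)
  have htel : ∑ t ∈ range N, ∑ a, π.p s h a *
        (Real.log ((πseq (t + 1)).p s h a) - Real.log ((πseq t).p s h a)) =
      ∑ a, π.p s h a * (Real.log ((πseq N).p s h a) - Real.log ((πseq 0).p s h a)) := by
    rw [sum_comm]
    simp only [← mul_sum]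
    exact sum_congr rfl fun a _ => by rw [sum_range_sub fun t => Real.log ((πseq t).p s h a)]
  have hKL : ∑ a, π.p s h a * (Real.log ((πseq N).p s h a) - Real.log ((πseq 0).p s h a)) ≤
      Real.log (Fintype.card A) :=
    sum_mul_le_of_forall_le (π.nonneg s h) (π.sum_one s h) fun a => by
      rw [hinit, one_div, Real.log_inv]
      linarith [Real.log_nonpos (hnpg.pos hinit N s h a).le ((πseq N).p_le_one s h a)]
  simp only [hnpg _ s h, hlog, sum_sub_distrib, ← mul_sum] at htel
  have hZ := hnpg.sum_log_expNormalizer_le hP hr hη hk N s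
  rw [div_add' _ _ _ hη.ne', le_div_iff₀' hη]
  linarith

lemma sum_valAux_sub_le (hnpg : IsNPGSequence H P r η πseq)
    (hinit : ∀ s h a, (πseq 0).p s h a = 1 / (Fintype.card A : ℝ))
    (hP : ∀ h s a, (∀ s', 0 ≤ P h s a s') ∧ ∑ s', P h s a s' = 1)
    (hr : ∀ h s a, r h s a ∈ Set.Icc (0 : ℝ) 1) (hη : 0 < η) {k h : ℕ} (hk : h + k = H)
    (π : EpiPolicy S A) (N : ℕ) (s : S) :
    ∑ t ∈ range N, (valAux P r π k h s - valAux P r (πseq t) k h s) ≤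
      k * (Real.log (Fintype.card A) / η) + k * (k + 1) / 2 := by
  induction k generalizing h s with
  | zero => simp [valAux]
  | succ k ih =>
    calc ∑ t ∈ range N, (valAux P r π (k + 1) h s - valAux P r (πseq t) (k + 1) h s)
        = ∑ t ∈ range N, ∑ a, π.p s h a * adv H P r (πseq t) h s a +
            ∑ a, π.p s h a * ∑ s', P h s a s' *
              ∑ t ∈ range N, (valAux P r π k (h + 1) s' - valAux P r (πseq t) k (h + 1) s') := by
          simp only [valAux_sub_valAux hk, sum_add_distrib]
          congr 1
          simp only [mul_sum]
          rw [sum_comm]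
          exact sum_congr rfl fun a _ => sum_comm
      _ ≤ (Real.log (Fintype.card A) / η + (k + 1)) +
            (k * (Real.log (Fintype.card A) / η) + k * (k + 1) / 2) :=
          add_le_add (hnpg.sum_sum_mul_adv_le hinit hP hr hη hk π N s)
            (sum_mul_le_of_forall_le (π.nonneg s h) (π.sum_one s h) fun a =>
              sum_mul_le_of_forall_le (hP h s a).1 (hP h s a).2 fun s' => ih (by omega) s')
      _ = _ := by push_cast; ring

lemma mul_valAux_sub_le (hnpg : IsNPGSequence H P r η πseq)
    (hinit : ∀ s h a, (πseq 0).p s h a = 1 / (Fintype.card A : ℝ))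
    (hP : ∀ h s a, (∀ s', 0 ≤ P h s a s') ∧ ∑ s', P h s a s' = 1)
    (hr : ∀ h s a, r h s a ∈ Set.Icc (0 : ℝ) 1) (hη : 0 < η)
    (π : EpiPolicy S A) (T : ℕ) (s : S) :
    (T + 1) * (valAux P r π H 0 s - valAux P r (πseq T) H 0 s) ≤
      H * (Real.log (Fintype.card A) / η) + H * (H + 1) / 2 := by
  have hmono : Monotone fun t => valAux P r (πseq t) H 0 s := monotone_nat_of_le_succ
    fun t => hnpg.valAux_le_valAux_succ (fun h s a => (hP h s a).1) hη (zero_add H) t s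
  calc (T + 1) * (valAux P r π H 0 s - valAux P r (πseq T) H 0 s)
      = ∑ _t ∈ range (T + 1), (valAux P r π H 0 s - valAux P r (πseq T) H 0 s) := by
        rw [sum_const, card_range, nsmul_eq_mul, Nat.cast_succ]
    _ ≤ ∑ t ∈ range (T + 1), (valAux P r π H 0 s - valAux P r (πseq t) H 0 s) :=
        sum_le_sum fun t ht => sub_le_sub_left (hmono (mem_range_succ_iff.1 ht)) _
    _ ≤ _ := hnpg.sum_valAux_sub_le hinit hP hr hη (zero_add H) π (T + 1) s

lemma valAux_sub_le (hnpg : IsNPGSequence H P r η πseq)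
    (hinit : ∀ s h a, (πseq 0).p s h a = 1 / (Fintype.card A : ℝ))
    (hP : ∀ h s a, (∀ s', 0 ≤ P h s a s') ∧ ∑ s', P h s a s' = 1)
    (hr : ∀ h s a, r h s a ∈ Set.Icc (0 : ℝ) 1) (hη : 0 < η) {T : ℕ} (hT : 1 ≤ T)
    (π : EpiPolicy S A) (s : S) :
    valAux P r π H 0 s - valAux P r (πseq T) H 0 s ≤
      H * Real.log (Fintype.card A) / (η * T) + η * H ^ 2 := by
  have := π.nonempty_of_state s
  rcases subsingleton_or_nontrivial A with hA | hA
  · rw [Subsingleton.elim π (πseq T), sub_self]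
    have := Real.log_natCast_nonneg (Fintype.card A)
    positivity
  have hL : 1 / 2 ≤ Real.log (Fintype.card A) := by
    have h2 : Real.log 2 ≤ Real.log (Fintype.card A) :=
      Real.log_le_log two_pos (by exact_mod_cast Fintype.one_lt_card)
    linarith [Real.log_two_gt_d9]
  have hle := valAux_le hP (fun h s a => (hr h s a).2) π H 0 s
  have hnonneg := valAux_nonneg (fun h s a => (hP h s a).1) (fun h s a => (hr h s a).1)
    (πseq T) H 0 s
  exact le_npg_rate hL hη (by exact_mod_cast hT) (by linarith)
    (hnpg.mul_valAux_sub_le hinit hP hr hη π T s)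

end IsNPGSequence

end NPG

/-- **Convergence of natural policy gradient (Lemma B.8).**
Starting from the uniform policy and performing the NPG (softmax advantage) update
with learning rate `η > 0`, after `T ≥ 1` iterations:
`max_π J(π;r) − J(π^{(T)};r) ≤ H·log A/(η·T) + η·H²`. -/
theorem npg_convergence
    (S A : Type) [Fintype S] [Fintype A]
    (H : ℕ) (P : ℕ → S → A → S → ℝ) (μ : S → ℝ)
    (hP : ∀ h s a, (∀ s', 0 ≤ P h s a s') ∧ ∑ s', P h s a s' = 1)
    (hμ : (∀ s, 0 ≤ μ s) ∧ ∑ s, μ s = 1)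
    (r : ℕ → S → A → ℝ) (hr : ∀ h s a, r h s a ∈ Set.Icc (0 : ℝ) 1)
    (η : ℝ) (hη : 0 < η) (T : ℕ) (hT : 1 ≤ T)
    (πseq : ℕ → EpiPolicy S A)
    (hinit : ∀ s h a, (πseq 0).p s h a = 1 / (Fintype.card A : ℝ))
    (hrec : ∀ t s h a, (πseq (t + 1)).p s h a =
      (πseq t).p s h a * Real.exp (η * adv H P r (πseq t) h s a) /
        ∑ a', (πseq t).p s h a' * Real.exp (η * adv H P r (πseq t) h s a')) :
    ∀ π : EpiPolicy S A,
      (∑ s, μ s * valAux P r π H 0 s) - (∑ s, μ s * valAux P r (πseq T) H 0 s) ≤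
        H * Real.log (Fintype.card A) / (η * T) + η * H ^ 2 := by
  intro π
  have hnpg : IsNPGSequence H P r η πseq := fun t s h => funext (hrec t s h)
  rw [← sum_sub_distrib]
  simp only [← mul_sub]
  exact sum_mul_le_of_forall_le hμ.1 hμ.2 fun s => hnpg.valAux_sub_le hinit hP hr hη hT π s
end

section
/- Coupon-collector integral formula (Equation 1). Let n ≥ 1 and let d = (d_1,…,d_n) be a probability vector with d_i > 0 for all i. Let X_1, X_2, … be an i.i.d. sequence of random variables taking values in {1,…,n} with distribution d, and let T = inf{ t ≥ 1 : {X_1,…,X_t} = {1,…,n} } be the first time all n values have appeared. Then T is almost surely finite and its expectation equals E[T] = ∫_0^∞ (1 − ∏_{i=1}^n (1 − e^{−d_i t})) dt. -/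
/-!
By the tail-sum formula, `E[T] = ∑_{t ≥ 0} P(T > t)`, and `T > t` means that some value is missing
among the first `t` draws. Inclusion–exclusion over the set `S` of missing values and independence
give `P(T > t) = ∑_{S ≠ ∅} (-1)^{|S|+1} (1 - d(S))^t` with `d(S) = ∑_{i ∈ S} d_i`, so summing
the geometric series `E[T] = ∑_{S ≠ ∅} (-1)^{|S|+1} / d(S)`. Expanding the product in the
integrand in the same way gives `∑_{S ≠ ∅} (-1)^{|S|+1} e^{-d(S) t}`, whose integral over `[0, ∞)`
is the same sum.
-/

open Finset MeasureTheory ProbabilityTheory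
open scoped ENNReal

theorem Finset.one_sub_prod_one_sub {ι R : Type*} [CommRing R] [DecidableEq ι]
    (s : Finset ι) (x : ι → R) :
    1 - ∏ i ∈ s, (1 - x i) = ∑ t ∈ s.powerset with t.Nonempty, (-1) ^ (#t + 1) * ∏ i ∈ t, x i := by
  rw [prod_sub, ← sum_filter_not_add_sum_filter _ (·.Nonempty)]
  simp [filter_eq', pow_succ, ← sum_neg_distrib]

theorem measurable_sInf_setOf {α : Type*} [MeasurableSpace α] {p : α → ℕ → Prop}
    (hp : ∀ k, MeasurableSet {x | p x k}) : Measurable fun x => sInf {k | p x k} := by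
  refine measurable_to_countable' fun m => ?_
  have hfiber : (fun x => sInf {k | p x k}) ⁻¹' {m} =
      {x | p x m ∧ ∀ k < m, ¬ p x k} ∪ {x | m = 0 ∧ ∀ k, ¬ p x k} := by
    ext x
    simp only [Set.mem_preimage, Set.mem_singleton_iff, Set.mem_union, Set.mem_ofPred_eq]
    constructor
    · rintro rfl
      by_cases hne : ∃ k, p x k
      · exact .inl ⟨Nat.sInf_mem hne, fun k hk => Nat.notMem_of_lt_sInf hk⟩
      · push Not at hne
        exact .inr ⟨by simp [hne], hne⟩
    · rintro (⟨hm, hlt⟩ | ⟨rfl, hnone⟩)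
      · exact le_antisymm (Nat.sInf_le hm) (not_lt.1 fun h => hlt _ h (Nat.sInf_mem ⟨m, hm⟩))
      · simp [hnone]
  rw [hfiber]
  measurability

theorem lintegral_natCast_eq_tsum_measure_lt {α : Type*} [MeasurableSpace α] {μ : Measure α}
    {f : α → ℕ} (hf : Measurable f) : ∫⁻ x, (f x : ℝ≥0∞) ∂μ = ∑' k : ℕ, μ {x | k < f x} := by
  have hset (k : ℕ) : MeasurableSet {x | k < f x} := hf measurableSet_Ioi
  have hpt (x : α) : (f x : ℝ≥0∞) = ∑' k : ℕ, {x | k < f x}.indicator 1 x := by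
    rw [tsum_eq_sum (s := range (f x)) (by simp +contextual),
      sum_congr rfl fun k hk => Set.indicator_of_mem (s := {x | k < f x}) (mem_range.1 hk) 1]
    simp
  rw [lintegral_congr hpt, lintegral_tsum fun k => (measurable_one.indicator (hset k)).aemeasurable]
  simp [lintegral_indicator_one (hset _)]

theorem integral_natCast_eq_tsum_measureReal_lt {α : Type*} [MeasurableSpace α] {μ : Measure α}
    [IsFiniteMeasure μ] {f : α → ℕ} (hf : Measurable f) :
    ∫ x, (f x : ℝ) ∂μ = ∑' k : ℕ, μ.real {x | k < f x} := by
  rw [integral_eq_lintegral_of_nonneg_ae (ae_of_all _ fun x => Nat.cast_nonneg _)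
    (measurable_from_top.comp hf).aestronglyMeasurable]
  simp_rw [ENNReal.ofReal_natCast]
  rw [lintegral_natCast_eq_tsum_measure_lt hf, ENNReal.tsum_toReal_eq fun k => measure_ne_top μ _]
  rfl

theorem integral_one_sub_prod_one_sub_exp {ι : Type*} [DecidableEq ι] {s : Finset ι} {d : ι → ℝ}
    (hd : ∀ i ∈ s, 0 < d i) :
    ∫ t in Set.Ioi 0, (1 - ∏ i ∈ s, (1 - Real.exp (-d i * t))) =
      ∑ S ∈ s.powerset with S.Nonempty, (-1) ^ (#S + 1) / ∑ i ∈ S, d i := by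
  have hpos : ∀ S ∈ s.powerset.filter (·.Nonempty), 0 < ∑ i ∈ S, d i := by
    intro S hS
    simp only [mem_filter, mem_powerset] at hS
    exact sum_pos (fun i hi => hd i (hS.1 hi)) hS.2
  simp_rw [one_sub_prod_one_sub, ← Real.exp_sum, ← sum_mul, sum_neg_distrib]
  rw [integral_finsetSum _ fun S hS => (exp_neg_integrableOn_Ioi 0 (hpos S hS)).const_mul _]
  refine sum_congr rfl fun S hS => ?_
  rw [integral_const_mul, integral_exp_mul_Ioi (neg_neg_of_pos (hpos S hS))]
  simp [div_eq_mul_inv]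

namespace ProbabilityTheory

variable {Ω ι : Type*} [MeasurableSpace Ω] {μ : Measure Ω} [MeasurableSpace ι] {X : ℕ → Ω → ι}

theorem iIndepFun.measure_forall_lt_mem (hindep : iIndepFun X μ) {A : Set ι}
    (hA : MeasurableSet A) (t : ℕ) :
    μ {ω | ∀ j < t, X j ω ∈ A} = ∏ j ∈ range t, μ (X j ⁻¹' A) := by
  rw [← hindep.measure_inter_preimage_eq_mul (range t) fun j _ => hA]
  congr 1
  ext ω
  simp

theorem iIndepFun.ae_exists_notMem (hindep : iIndepFun X μ) {A : Set ι} (hA : MeasurableSet A)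
    {p : ℝ≥0∞} (hp : ∀ j, μ (X j ⁻¹' A) = p) (hp_lt : p < 1) : ∀ᵐ ω ∂μ, ∃ j, X j ω ∉ A := by
  simp only [ae_iff, not_exists, not_not]
  refine le_antisymm (ge_of_tendsto' (ENNReal.tendsto_pow_atTop_nhds_zero_of_lt_one hp_lt)
    fun t => ?_) bot_le
  calc μ {ω | ∀ j, X j ω ∈ A} ≤ μ {ω | ∀ j < t, X j ω ∈ A} := measure_mono fun ω h j _ => h j
    _ = p ^ t := by simp [hindep.measure_forall_lt_mem hA, hp]

end ProbabilityTheory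

section CouponCollector

variable {Ω ι : Type*} {X : ℕ → Ω → ι}

/-- On the null event where some value never appears, this is the junk value `sInf ∅ = 0`. -/
noncomputable def collectionTime (X : ℕ → Ω → ι) (ω : Ω) : ℕ :=
  sInf {t | ∀ v, ∃ j < t, X j ω = v}

theorem lt_collectionTime_iff {ω : Ω} (h : ∃ t, ∀ v, ∃ j < t, X j ω = v) (t : ℕ) :
    t < collectionTime X ω ↔ ∃ v, ∀ j < t, X j ω ≠ v := by
  constructor
  · intro ht
    simpa using Nat.notMem_of_lt_sInf ht
  · rintro ⟨v, hv⟩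
    by_contra! hle
    obtain ⟨j, hj, rfl⟩ := Nat.sInf_mem h v
    exact hv j (hj.trans_le hle) rfl

variable [MeasurableSpace Ω] [MeasurableSpace ι] [MeasurableSingletonClass ι]

theorem measurable_collectionTime [Countable ι] (hX : ∀ j, Measurable (X j)) :
    Measurable (collectionTime X) :=
  measurable_sInf_setOf fun t => by measurability

variable {μ : Measure Ω} [IsProbabilityMeasure μ] {d : ι → ℝ}

theorem measureReal_preimage_finset (hX : ∀ j, Measurable (X j))
    (hlaw : ∀ j v, μ.real (X j ⁻¹' {v}) = d v) (j : ℕ) (S : Finset ι) :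
    μ.real (X j ⁻¹' S) = ∑ i ∈ S, d i := by
  rw [← sum_measureReal_preimage_singleton S fun v _ => hX j (measurableSet_singleton v)]
  simp [hlaw]

theorem ae_exists_forall_exists_lt_eq [Fintype ι] (hX : ∀ j, Measurable (X j))
    (hindep : iIndepFun X μ) (hlaw : ∀ j v, μ.real (X j ⁻¹' {v}) = d v) (hd : ∀ v, 0 < d v) :
    ∀ᵐ ω ∂μ, ∃ t, ∀ v, ∃ j < t, X j ω = v := by
  have hmiss (v : ι) : ∀ᵐ ω ∂μ, ∃ j, X j ω = v := by
    refine (hindep.ae_exists_notMem (measurableSet_singleton v).compl (p := .ofReal (1 - d v))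
      (fun j => ?_) (by simpa using hd v)).mono fun ω ⟨j, hj⟩ => ⟨j, by simpa using hj⟩
    rw [← ofReal_measureReal, Set.preimage_compl,
      probReal_compl_eq_one_sub (hX j (measurableSet_singleton v)), hlaw]
  filter_upwards [ae_all_iff.2 hmiss] with ω hω
  choose j hj using hω
  exact ⟨univ.sup j + 1, fun v => ⟨j v, Nat.lt_succ_of_le (le_sup (mem_univ v)), hj v⟩⟩

theorem measureReal_lt_collectionTime [Fintype ι] [DecidableEq ι] (hX : ∀ j, Measurable (X j))
    (hindep : iIndepFun X μ) (hlaw : ∀ j v, μ.real (X j ⁻¹' {v}) = d v) (hd : ∀ v, 0 < d v)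
    (t : ℕ) :
    μ.real {ω | t < collectionTime X ω} =
      ∑ S ∈ univ.powerset with S.Nonempty, (-1) ^ (#S + 1) * (1 - ∑ i ∈ S, d i) ^ t := by
  have hmissing : {ω | t < collectionTime X ω} =ᵐ[μ] ⋃ v ∈ univ, {ω | ∀ j < t, X j ω ≠ v} := by
    refine Filter.eventuallyEq_set.2 ?_
    filter_upwards [ae_exists_forall_exists_lt_eq hX hindep hlaw hd] with ω hω
    simp [lt_collectionTime_iff hω]
  rw [measureReal_congr hmissing, measureReal_biUnion_eq_sum_powerset fun v _ => by measurability]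
  refine sum_congr rfl fun S _ => ?_
  have hinter : ⋂ v ∈ S, {ω | ∀ j < t, X j ω ≠ v} = {ω | ∀ j < t, X j ω ∈ (S : Set ι)ᶜ} := by
    ext ω
    simp only [Set.mem_iInter, Set.mem_ofPred_eq, Set.mem_compl_iff, mem_coe]
    exact ⟨fun h j hj hS => h _ hS j hj rfl, fun h i hi j hj he => h j hj (he ▸ hi)⟩
  have hfactor (j : ℕ) : (μ (X j ⁻¹' (S : Set ι)ᶜ)).toReal = 1 - ∑ i ∈ S, d i := by
    rw [← measureReal_def, Set.preimage_compl, probReal_compl_eq_one_sub (hX j S.measurableSet),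
      measureReal_preimage_finset hX hlaw]
  rw [hinter, measureReal_def, hindep.measure_forall_lt_mem (by measurability),
    ENNReal.toReal_prod, prod_congr rfl fun j _ => hfactor j, prod_const, card_range]

theorem integral_collectionTime [Fintype ι] [DecidableEq ι] (hX : ∀ j, Measurable (X j))
    (hindep : iIndepFun X μ) (hlaw : ∀ j v, μ.real (X j ⁻¹' {v}) = d v) (hd : ∀ v, 0 < d v) :
    ∫ ω, (collectionTime X ω : ℝ) ∂μ =
      ∑ S ∈ univ.powerset with S.Nonempty, (-1) ^ (#S + 1) / ∑ i ∈ S, d i := by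
  have hgeom : ∀ S ∈ univ.powerset.filter (·.Nonempty), HasSum
      (fun t => (-1) ^ (#S + 1) * (1 - ∑ i ∈ S, d i) ^ t) ((-1) ^ (#S + 1) / ∑ i ∈ S, d i) := by
    intro S hS
    have hpos : 0 < ∑ i ∈ S, d i := sum_pos (fun i _ => hd i) (mem_filter.1 hS).2
    have hle : ∑ i ∈ S, d i ≤ 1 := measureReal_preimage_finset hX hlaw 0 S ▸ measureReal_le_one
    simpa [div_eq_mul_inv] using (hasSum_geometric_of_lt_one (r := 1 - ∑ i ∈ S, d i)
      (by linarith) (by linarith)).mul_left ((-1 : ℝ) ^ (#S + 1))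
  rw [integral_natCast_eq_tsum_measureReal_lt (measurable_collectionTime hX)]
  simp_rw [measureReal_lt_collectionTime hX hindep hlaw hd]
  exact (hasSum_sum hgeom).tsum_eq

end CouponCollector

theorem coupon_collector_integral_general
    (n : ℕ) (d : Fin n → ℝ)
    (hd : ∀ i, 0 < d i)
    (Ω : Type) [MeasurableSpace Ω] (μ : Measure Ω) [IsProbabilityMeasure μ]
    (X : ℕ → Ω → Fin n) (hmeas : ∀ j, Measurable (X j))
    (hindep : iIndepFun X μ)
    (hlaw : ∀ j v, μ {ω | X j ω = v} = ENNReal.ofReal (d v)) :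
    (∀ᵐ ω ∂μ, ∃ t : ℕ, ∀ v : Fin n, ∃ j < t, X j ω = v) ∧
      ∫ ω, ((sInf {t : ℕ | ∀ v : Fin n, ∃ j < t, X j ω = v} : ℕ) : ℝ) ∂μ =
        ∫ t in Set.Ici (0 : ℝ), (1 - ∏ i, (1 - Real.exp (-(d i) * t))) := by
  have hlaw_real (j : ℕ) (v : Fin n) : μ.real (X j ⁻¹' {v}) = d v := by
    rw [measureReal_def, ← ENNReal.toReal_ofReal (hd v).le, ← hlaw j v]
    rfl
  refine ⟨ae_exists_forall_exists_lt_eq hmeas hindep hlaw_real hd, ?_⟩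
  rw [integral_Ici_eq_integral_Ioi, integral_one_sub_prod_one_sub_exp fun i _ => hd i]
  exact integral_collectionTime hmeas hindep hlaw_real hd

/-- **Coupon-collector integral formula (Equation 1).**
Let `d` be a fully-supported probability vector on `{1,…,n}` and `X_1, X_2, …` an
i.i.d. sequence with distribution `d` (here `X j` is the `(j+1)`-st draw).  Let
`T = inf {t ≥ 1 : {X_1,…,X_t} = {1,…,n}}` be the first time all `n` values have
appeared.  Then `T` is almost surely finite and
`E[T] = ∫_0^∞ (1 − ∏ i, (1 − e^{−d_i t})) dt`. -/
theorem coupon_collector_integral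
    (n : ℕ) (hn : 1 ≤ n) (d : Fin n → ℝ)
    (hd : ∀ i, 0 < d i) (hsum : ∑ i, d i = 1)
    (Ω : Type) [MeasurableSpace Ω] (μ : Measure Ω) [IsProbabilityMeasure μ]
    (X : ℕ → Ω → Fin n) (hmeas : ∀ j, Measurable (X j))
    (hindep : iIndepFun X μ)
    (hlaw : ∀ j v, μ {ω | X j ω = v} = ENNReal.ofReal (d v)) :
    (∀ᵐ ω ∂μ, ∃ t : ℕ, ∀ v : Fin n, ∃ j < t, X j ω = v) ∧
      ∫ ω, ((sInf {t : ℕ | ∀ v : Fin n, ∃ j < t, X j ω = v} : ℕ) : ℝ) ∂μ =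
        ∫ t in Set.Ici (0 : ℝ), (1 - ∏ i, (1 - Real.exp (-(d i) * t))) :=
  coupon_collector_integral_general n d hd Ω μ X hmeas hindep hlaw
end
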